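/- In the HCV model with controls eps, rho in [0,1], along any solution with nonnegative state, the quantity N = T + I satisfies dN/dt <= s + r*N*(1 - N/T_max) - min(d, delta)*N; consequently if N(0) <= N* where N* is the positive root of s + r*x*(1 - x/T_max) - min(d,delta)*x = 0, then N(t) <= N* for all t >= 0. -/

import Mathlib

/-!
Adding the two equations cancels the infection terms `± beta * VI * T`, and bounding the
death terms `d * T + delta * I` below by `min d delta * (T + I)` gives
`N' ≤ F N` for the logistic supply `F x = s + r x (1 - x / Tmax) - min d delta * x`.
Since `F` is a concave quadratic with `F 0 = s > 0`, it is negative beyond its positive root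
`N*`, so `N` can never cross the level `N* + ε` from below; letting `ε → 0` gives `N ≤ N*`.
-/

open Set

theorem image_le_of_deriv_right_neg_above {f f' : ℝ → ℝ} {a b c : ℝ}
    (hf : ContinuousOn f (Icc a b)) (hf' : ∀ x ∈ Ico a b, HasDerivWithinAt f (f' x) (Ici x) x)
    (ha : f a ≤ c) (bound : ∀ x ∈ Ico a b, c < f x → f' x < 0) :
    ∀ ⦃x⦄, x ∈ Icc a b → f x ≤ c := by
  intro x hx
  refine le_of_forall_pos_le_add fun ε hε => ?_
  have hcε : c < c + ε := lt_add_of_pos_right c hε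
  refine image_le_of_deriv_right_lt_deriv_boundary' (B := fun _ => c + ε) hf hf'
    (ha.trans hcε.le) continuousOn_const (fun _ _ => hasDerivWithinAt_const _ _ _)
    (fun y hy hfy => bound y hy (hfy ▸ hcε)) hx

theorem logistic_supply_neg_of_root_lt {s r K m ξ x : ℝ} (hs : 0 < s) (hr : 0 ≤ r) (hK : 0 ≤ K)
    (hξ : 0 < ξ) (hroot : s + r * ξ * (1 - ξ / K) - m * ξ = 0) (hx : ξ < x) :
    s + r * x * (1 - x / K) - m * x < 0 := by
  have key : ξ * (s + r * x * (1 - x / K) - m * x) = (ξ - x) * (s + r / K * x * ξ) := by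
    linear_combination x * hroot
  have hpos : 0 < s + r / K * x * ξ :=
    add_pos_of_pos_of_nonneg hs
      (mul_nonneg (mul_nonneg (div_nonneg hr hK) (hξ.trans hx).le) hξ.le)
  exact neg_of_mul_neg_right (key ▸ mul_neg_of_neg_of_pos (sub_neg.2 hx) hpos) hξ.le

theorem hcv_total_rate_le (s r d delta beta Tmax T I VI : ℝ) (hT : 0 ≤ T) (hI : 0 ≤ I) :
    (s + r * T * (1 - (T + I) / Tmax) - d * T - beta * VI * T) +
      (beta * VI * T + r * I * (1 - (T + I) / Tmax) - delta * I) ≤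
      s + r * (T + I) * (1 - (T + I) / Tmax) - min d delta * (T + I) := by
  linear_combination mul_le_mul_of_nonneg_right (min_le_left d delta) hT +
    mul_le_mul_of_nonneg_right (min_le_right d delta) hI

theorem stmt_13_general (s r d delta beta Tmax : ℝ)
    (hs : 0 < s) (hr : 0 < r) (hT : 0 < Tmax)
    (T I VI : ℝ → ℝ)
    (hTnn : ∀ t, 0 ≤ t → 0 ≤ T t) (hInn : ∀ t, 0 ≤ t → 0 ≤ I t)
    (hdT : ∀ t, 0 ≤ t → HasDerivAt T
      (s + r * T t * (1 - (T t + I t) / Tmax) - d * T t - beta * VI t * T t) t)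
    (hdI : ∀ t, 0 ≤ t → HasDerivAt I
      (beta * VI t * T t + r * I t * (1 - (T t + I t) / Tmax) - delta * I t) t)
    (Nstar : ℝ) (hNstar : 0 < Nstar)
    (hNroot : s + r * Nstar * (1 - Nstar / Tmax) - min d delta * Nstar = 0) :
    let N : ℝ → ℝ := fun t => T t + I t
    (∀ t, 0 ≤ t →
      (s + r * (T t) * (1 - (T t + I t) / Tmax) - d * T t - beta * VI t * T t) +
      (beta * VI t * T t + r * (I t) * (1 - (T t + I t) / Tmax) - delta * I t) ≤
        s + r * N t * (1 - N t / Tmax) - min d delta * N t) ∧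
    (N 0 ≤ Nstar → ∀ t, 0 ≤ t → N t ≤ Nstar) := by
  intro N
  have hrate : ∀ t : ℝ, 0 ≤ t → _ := fun t ht =>
    hcv_total_rate_le s r d delta beta Tmax (T t) (I t) (VI t) (hTnn t ht) (hInn t ht)
  refine ⟨hrate, fun hN0 t ht => ?_⟩
  have hN : ∀ u, 0 ≤ u → HasDerivAt N _ u := fun u hu => (hdT u hu).add (hdI u hu)
  exact image_le_of_deriv_right_neg_above
    (fun u hu => (hN u hu.1).continuousAt.continuousWithinAt)
    (fun u hu => (hN u hu.1).hasDerivWithinAt) hN0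
    (fun u hu hlt => (hrate u hu.1).trans_lt
      (logistic_supply_neg_of_root_lt hs hr.le hT.le hNstar hNroot hlt))
    ⟨ht, le_rfl⟩

theorem stmt_13 (s r d delta beta Tmax : ℝ)
    (hs : 0 < s) (hr : 0 < r) (hd : 0 < d) (hdelta : 0 < delta)
    (hbeta : 0 < beta) (hT : 0 < Tmax) (eps rho : ℝ)
    (heps : eps ∈ Set.Icc (0:ℝ) 1) (hrho : rho ∈ Set.Icc (0:ℝ) 1)
    (T I VI : ℝ → ℝ)
    (hTnn : ∀ t, 0 ≤ t → 0 ≤ T t) (hInn : ∀ t, 0 ≤ t → 0 ≤ I t)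
    (hVInn : ∀ t, 0 ≤ t → 0 ≤ VI t)
    (hdT : ∀ t, 0 ≤ t → HasDerivAt T
      (s + r * T t * (1 - (T t + I t) / Tmax) - d * T t - beta * VI t * T t) t)
    (hdI : ∀ t, 0 ≤ t → HasDerivAt I
      (beta * VI t * T t + r * I t * (1 - (T t + I t) / Tmax) - delta * I t) t)
    (Nstar : ℝ) (hNstar : 0 < Nstar)
    (hNroot : s + r * Nstar * (1 - Nstar / Tmax) - min d delta * Nstar = 0) :
    let N : ℝ → ℝ := fun t => T t + I t
    (∀ t, 0 ≤ t →
      (s + r * (T t) * (1 - (T t + I t) / Tmax) - d * T t - beta * VI t * T t) +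
      (beta * VI t * T t + r * (I t) * (1 - (T t + I t) / Tmax) - delta * I t) ≤
        s + r * N t * (1 - N t / Tmax) - min d delta * N t) ∧
    (N 0 ≤ Nstar → ∀ t, 0 ≤ t → N t ≤ Nstar) :=
  stmt_13_general s r d delta beta Tmax hs hr hT T I VI hTnn hInn hdT hdI Nstar hNstar hNroot
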